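/- arXiv:2505.16904 — 2 statements merged into one kernel-verified Lean document; each statement's English description precedes it below -/
import Mathlib

section
/- For all real N, P > 0 and parameters m, c, k > 0: N·(N(1-N/k) - mNP/(1+N)) + P·(-cP + mNP/(1+N)) + (1/2)·(N(1+N/k) + mNP/(1+N)) + (1/2)·(cP + mNP/(1+N)) ≤ ((5+6m+c)/4 + 1/(2k))·(1 + N² + P²). -/
/-! With `Q = m N P / (1 + N)` the left-hand side is
`N² - N³/k + N/2 + N²/(2k) - cP² + cP/2 + Q (P + 1 - N)`. The Holling response is bounded,
`0 ≤ Q ≤ m P`, so the interaction term is at most `m P (P + 1)`; the cubic `-N³/k` is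
nonpositive, and the remaining quadratic terms are absorbed by AM-GM. -/

lemma rm_generator_eq (c k N P Q : ℝ) :
    N * (N * (1 - N / k) - Q) + P * (-c * P + Q) + 1 / 2 * (N * (1 + N / k) + Q) +
        1 / 2 * (c * P + Q) =
      N ^ 2 + N / 2 - c * P ^ 2 + c * P / 2 + (N ^ 2 / (2 * k) - N ^ 3 / k) +
        Q * (P + 1 - N) := by
  ring

lemma holling_response_le {m N P : ℝ} (hm : 0 ≤ m) (hN : 0 ≤ N) (hP : 0 ≤ P) :
    m * N * P / (1 + N) ≤ m * P := by
  rw [div_le_iff₀ (by positivity)]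
  nlinarith [mul_nonneg hm hP]

lemma rm_interaction_le {m N P Q : ℝ} (hN : 0 ≤ N) (hP : 0 ≤ P) (hQ₀ : 0 ≤ Q)
    (hQ : Q ≤ m * P) :
    Q * (P + 1 - N) ≤ m * P * (P + 1) :=
  calc Q * (P + 1 - N) ≤ Q * (P + 1) := by nlinarith
    _ ≤ m * P * (P + 1) := by gcongr

lemma logistic_cubic_le {k N : ℝ} (hk : 0 < k) (hN : 0 ≤ N) (S : ℝ) (hS : N ^ 2 ≤ S) :
    N ^ 2 / (2 * k) - N ^ 3 / k ≤ S / (2 * k) := by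
  have : 0 ≤ N ^ 3 / k := by positivity
  have : N ^ 2 / (2 * k) ≤ S / (2 * k) := by gcongr
  linarith

lemma rm_quadratic_le {m c N P : ℝ} (hm : 0 ≤ m) (hc : 0 ≤ c) :
    N ^ 2 + N / 2 - c * P ^ 2 + c * P / 2 + m * P * (P + 1) ≤
      (5 + 6 * m + c) / 4 * (1 + N ^ 2 + P ^ 2) := by
  nlinarith [sq_nonneg (N - 1), mul_nonneg hc (sq_nonneg (P - 1 / 2)),
    mul_nonneg hm (sq_nonneg (P - 1)), mul_nonneg hm (sq_nonneg P),
    mul_nonneg hc (sq_nonneg N), mul_nonneg hm (sq_nonneg N)]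

theorem rm_monotonicity_condition (m c k N P : ℝ) (hm : 0 < m) (hc : 0 < c) (hk : 0 < k)
    (hN : 0 < N) (hP : 0 < P) :
    N * (N * (1 - N / k) - m * N * P / (1 + N)) +
        P * (-c * P + m * N * P / (1 + N)) +
        1 / 2 * (N * (1 + N / k) + m * N * P / (1 + N)) +
        1 / 2 * (c * P + m * N * P / (1 + N)) ≤
      ((5 + 6 * m + c) / 4 + 1 / (2 * k)) * (1 + N ^ 2 + P ^ 2) := by
  rw [rm_generator_eq, add_mul, one_div_mul_eq_div]
  have hinter := rm_interaction_le hN.le hP.le (by positivity)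
    (holling_response_le hm.le hN.le hP.le)
  have hlog := logistic_cubic_le hk hN.le (1 + N ^ 2 + P ^ 2) (by nlinarith [sq_nonneg P])
  have hquad := rm_quadratic_le (N := N) (P := P) hm.le hc.le
  linarith
end

section
/- Let V(N,P) = (1+N²+P²)^α with α > 2, and let L be the generator of the stochastic Rosenzweig–MacArthur system. Then for all N, P > 0, LV(N,P) ≤ C₁·V(N,P), where C₁ = 3α + 5αm/2 + αc/2 + α/k + α(α-1)(1 + 2/k + 2m + c). -/
/-!
With `s = 1 + N² + P²` and `V = s ^ α`, the chain rule gives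
`LV = α s^(α-1) (2Nμ₁ + 2Pμ₂ + a₁₁ + a₂₂) + α(α-1) s^(α-2) (2a₁₁N² + 2a₂₂P²)`.
In the first bracket the only cubic term, `-2N³/k`, is negative, so it is `O(s)`; the second
is quartic, hence `O(s²)`, since the predation term `mNP/(1+N)` is at most `mP`. Multiplying
by the nonnegative factors `α s^(α-1)` and `α(α-1) s^(α-2)` turns both into `O(s^α)`.
-/

theorem hasDerivAt_rpow_const_add_sq {b : ℝ} (hb : 0 < b) (α x : ℝ) :
    HasDerivAt (fun t : ℝ => (b + t ^ 2) ^ α) (α * (b + x ^ 2) ^ (α - 1) * (2 * x)) x := by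
  have h := ((hasDerivAt_pow 2 x).const_add b).rpow_const (p := α) (Or.inl (by positivity))
  convert h using 1
  push_cast
  ring

theorem deriv_rpow_const_add_sq {b : ℝ} (hb : 0 < b) (α x : ℝ) :
    deriv (fun t : ℝ => (b + t ^ 2) ^ α) x = α * (b + x ^ 2) ^ (α - 1) * (2 * x) :=
  (hasDerivAt_rpow_const_add_sq hb α x).deriv

theorem deriv_deriv_rpow_const_add_sq {b : ℝ} (hb : 0 < b) (α x : ℝ) :
    deriv (deriv fun t : ℝ => (b + t ^ 2) ^ α) x =
      α * (α - 1) * (b + x ^ 2) ^ (α - 2) * (2 * x) ^ 2 + α * (b + x ^ 2) ^ (α - 1) * 2 := by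
  have hderiv : (deriv fun t : ℝ => (b + t ^ 2) ^ α) =
      fun t => α * ((b + t ^ 2) ^ (α - 1) * (2 * t)) := by
    funext t
    rw [deriv_rpow_const_add_sq hb]
    ring
  have h := hasDerivAt_rpow_const_add_sq hb (α - 1) x
  rw [show α - 1 - 1 = α - 2 by ring] at h
  rw [hderiv]
  exact ((h.mul ((hasDerivAt_id' x).const_mul 2)).const_mul α).deriv.trans (by ring)

section Estimates

variable {m c k N P : ℝ}

theorem predation_le_mul (hm : 0 ≤ m) (hN : 0 ≤ N) (hP : 0 ≤ P) :
    m * N * P / (1 + N) ≤ m * P := by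
  rw [div_le_iff₀ (by positivity)]
  nlinarith [mul_nonneg hm hP]

theorem predation_mul_le (hm : 0 ≤ m) (hN : 0 ≤ N) (hP : 0 ≤ P) :
    2 * (m * N * P / (1 + N)) * (1 + P - N) ≤ 5 * m / 2 * (1 + N ^ 2 + P ^ 2) := by
  rw [mul_comm 2, mul_assoc, div_mul_eq_mul_div, div_le_iff₀ (by positivity)]
  -- once the denominator is cleared, `-2mNP` is absorbed by `m(N² + P²)` and `-2mNP²` by `mNP²`
  nlinarith [mul_nonneg hm (sq_nonneg (N - P)), mul_nonneg (mul_nonneg hm hN) (sq_nonneg (N - P)),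
    mul_nonneg (mul_nonneg hm hN) (sq_nonneg P), mul_nonneg (mul_nonneg hm hN) (sq_nonneg N),
    mul_nonneg hm hN, mul_nonneg hm hP]

theorem drift_le (hm : 0 ≤ m) (hc : 0 ≤ c) (hk : 0 < k) (hN : 0 ≤ N) (hP : 0 ≤ P) :
    2 * N * (N * (1 - N / k) - m * N * P / (1 + N)) + 2 * P * (-c * P + m * N * P / (1 + N)) +
        (N * (1 + N / k) + m * N * P / (1 + N)) + (c * P + m * N * P / (1 + N)) ≤
      (3 + 5 * m / 2 + c / 2 + 1 / k) * (1 + N ^ 2 + P ^ 2) := by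
  have hpred := predation_mul_le hm hN hP
  have hlogistic : 2 * N ^ 2 + N ≤ 3 * (1 + N ^ 2 + P ^ 2) := by
    nlinarith [sq_nonneg (N - 1), sq_nonneg P]
  have hcompetition : (N ^ 2 - 2 * N ^ 3) / k ≤ 1 / k * (1 + N ^ 2 + P ^ 2) := by
    rw [one_div_mul_eq_div]
    gcongr
    nlinarith [pow_nonneg hN 3, sq_nonneg P]
  have hmortality : c * (P - 2 * P ^ 2) ≤ c / 2 * (1 + N ^ 2 + P ^ 2) := by
    nlinarith [mul_nonneg hc (sq_nonneg (P - 1)), mul_nonneg hc (sq_nonneg N),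
      mul_nonneg hc (sq_nonneg P)]
  have hexpand : 2 * N * (N * (1 - N / k) - m * N * P / (1 + N)) +
        2 * P * (-c * P + m * N * P / (1 + N)) + (N * (1 + N / k) + m * N * P / (1 + N)) +
        (c * P + m * N * P / (1 + N)) =
      (2 * N ^ 2 + N) + (N ^ 2 - 2 * N ^ 3) / k + c * (P - 2 * P ^ 2) +
        2 * (m * N * P / (1 + N)) * (1 + P - N) := by
    field_simp
    ring
  rw [hexpand]
  linarith

theorem diffusion_le (hm : 0 ≤ m) (hc : 0 ≤ c) (hk : 0 < k) (hN : 0 ≤ N) (hP : 0 ≤ P) :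
    2 * (N * (1 + N / k) + m * N * P / (1 + N)) * N ^ 2 +
        2 * (c * P + m * N * P / (1 + N)) * P ^ 2 ≤
      (1 + 2 / k + 2 * m + c) * (1 + N ^ 2 + P ^ 2) ^ 2 := by
  set s := 1 + N ^ 2 + P ^ 2
  have hN2 : 1 + N ^ 2 ≤ s := by nlinarith [sq_nonneg P]
  have hP2 : 1 + P ^ 2 ≤ s := by nlinarith [sq_nonneg N]
  have hcube (x : ℝ) (hx : 1 + x ^ 2 ≤ s) : 2 * x ^ 3 ≤ s ^ 2 := by
    nlinarith [sq_nonneg (x ^ 2 - x), mul_le_mul hx hx (by positivity) (by positivity)]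
  have hpred : 2 * (m * N * P / (1 + N)) * (N ^ 2 + P ^ 2) ≤ 2 * m * s ^ 2 := by
    have hPs : P ≤ s := by nlinarith [sq_nonneg (P - 1), sq_nonneg N]
    calc 2 * (m * N * P / (1 + N)) * (N ^ 2 + P ^ 2) ≤ 2 * (m * P) * (N ^ 2 + P ^ 2) := by
          gcongr
          exact predation_le_mul hm hN hP
      _ ≤ 2 * (m * s) * s := by gcongr; linarith
      _ = 2 * m * s ^ 2 := by ring
  have hquartic : 2 * N ^ 4 / k ≤ 2 / k * s ^ 2 := by
    rw [div_mul_eq_mul_div]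
    gcongr
    nlinarith [sq_nonneg N, sq_nonneg P]
  have hexpand : 2 * (N * (1 + N / k) + m * N * P / (1 + N)) * N ^ 2 +
        2 * (c * P + m * N * P / (1 + N)) * P ^ 2 =
      2 * N ^ 3 + 2 * N ^ 4 / k + 2 * (m * N * P / (1 + N)) * (N ^ 2 + P ^ 2) +
        c * (2 * P ^ 3) := by
    field_simp
    ring
  rw [hexpand]
  linarith [hcube N hN2, mul_le_mul_of_nonneg_left (hcube P hP2) hc]

end Estimates

theorem mul_rpow_sub_one_add_mul_rpow_sub_two_le {s α A B a b : ℝ} (hs : 0 < s) (hα : 1 ≤ α)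
    (hA : A ≤ a * s) (hB : B ≤ b * s ^ 2) :
    α * s ^ (α - 1) * A + α * (α - 1) * s ^ (α - 2) * B ≤ (α * a + α * (α - 1) * b) * s ^ α := by
  have hs1 : s ^ (α - 1) * s = s ^ α := by
    rw [← Real.rpow_add_one hs.ne', sub_add_cancel]
  have hs2 : s ^ (α - 2) * s ^ 2 = s ^ α := by
    rw [← Real.rpow_natCast, ← Real.rpow_add hs]
    norm_num
  have h1 := mul_le_mul_of_nonneg_left hA (by positivity : 0 ≤ α * s ^ (α - 1))
  have h2 := mul_le_mul_of_nonneg_left hB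
    (mul_nonneg (mul_nonneg (by linarith) (by linarith)) (by positivity) :
      0 ≤ α * (α - 1) * s ^ (α - 2))
  calc α * s ^ (α - 1) * A + α * (α - 1) * s ^ (α - 2) * B
      ≤ α * s ^ (α - 1) * (a * s) + α * (α - 1) * s ^ (α - 2) * (b * s ^ 2) := add_le_add h1 h2
    _ = α * a * (s ^ (α - 1) * s) + α * (α - 1) * b * (s ^ (α - 2) * s ^ 2) := by ring
    _ = (α * a + α * (α - 1) * b) * s ^ α := by rw [hs1, hs2]; ring

theorem rm_generator_lyapunov_bound (m c k α : ℝ) (hm : 0 < m) (hc : 0 < c) (hk : 0 < k)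
    (hα : 2 < α) (N P : ℝ) (hN : 0 < N) (hP : 0 < P) :
    let V : ℝ → ℝ → ℝ := fun x y => (1 + x ^ 2 + y ^ 2) ^ α
    let μ₁ : ℝ := N * (1 - N / k) - m * N * P / (1 + N)
    let μ₂ : ℝ := -c * P + m * N * P / (1 + N)
    let a₁₁ : ℝ := N * (1 + N / k) + m * N * P / (1 + N)
    let a₂₂ : ℝ := c * P + m * N * P / (1 + N)
    let C₁ : ℝ := 3 * α + 5 * α * m / 2 + α * c / 2 + α / k +
      α * (α - 1) * (1 + 2 / k + 2 * m + c)
    μ₁ * deriv (fun x => V x P) N + μ₂ * deriv (fun y => V N y) P +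
        1 / 2 * a₁₁ * deriv (deriv (fun x => V x P)) N +
        1 / 2 * a₂₂ * deriv (deriv (fun y => V N y)) P ≤
      C₁ * V N P := by
  intro V μ₁ μ₂ a₁₁ a₂₂ C₁
  have hV : (fun x => V x P) = fun x => (1 + P ^ 2 + x ^ 2) ^ α := by
    funext x
    rw [add_right_comm]
  have hP2 : 0 < 1 + P ^ 2 := by positivity
  have hN2 : 0 < 1 + N ^ 2 := by positivity
  simp only [hV, V, deriv_rpow_const_add_sq hP2, deriv_rpow_const_add_sq hN2,
    deriv_deriv_rpow_const_add_sq hP2, deriv_deriv_rpow_const_add_sq hN2,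
    add_right_comm 1 (P ^ 2) (N ^ 2)]
  calc _ = α * (1 + N ^ 2 + P ^ 2) ^ (α - 1) * (2 * N * μ₁ + 2 * P * μ₂ + a₁₁ + a₂₂) +
        α * (α - 1) * (1 + N ^ 2 + P ^ 2) ^ (α - 2) * (2 * a₁₁ * N ^ 2 + 2 * a₂₂ * P ^ 2) := by
        ring
    _ ≤ _ := mul_rpow_sub_one_add_mul_rpow_sub_two_le (by positivity) (by linarith)
        (drift_le hm.le hc.le hk hN.le hP.le) (diffusion_le hm.le hc.le hk hN.le hP.le)
    _ = C₁ * (1 + N ^ 2 + P ^ 2) ^ α := by ring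
end
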